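/- arXiv:1809.08665 — 4 statements merged into one kernel-verified Lean document; each statement's English description precedes it below -/
import Mathlib

section
/- Let (M_p) be a sequence of positive reals such that for every ℓ > 0 the series ∑_k k!ℓ^k/M_k converges and satisfies ∑_{k=p}^∞ k!ℓ^k/M_k ≤ C_ℓ p!ℓ^p/M_p. Let S(n,k) denote the Stirling numbers of the second kind. Then for every ℓ > 0 there exists C_ℓ > 0 such that for all p ∈ ℕ, ∑_{k=p}^∞ S(k+1, p+1)·ℓ^k/M_k ≤ C_ℓ·(2ℓ)^p/M_p. -/
open Filter Topology


/-- Stirling numbers of the second kind. -/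
def stirling2 : ℕ → ℕ → ℕ
  | 0, 0 => 1
  | 0, _ + 1 => 0
  | _ + 1, 0 => 0
  | n + 1, k + 1 => (k + 1) * stirling2 n (k + 1) + stirling2 n k

lemma stirling2_eq_zero : ∀ n k : ℕ, n < k → stirling2 n k = 0
  | 0, _ + 1, _ => rfl
  | n + 1, k + 1, h => by
    have h1 : n < k + 1 := by omega
    have h2 : n < k := by omega
    simp [stirling2, stirling2_eq_zero n (k+1) h1, stirling2_eq_zero n k h2]

lemma stirling2_self : ∀ n : ℕ, stirling2 n n = 1
  | 0 => rfl
  | n + 1 => by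
    simp [stirling2, stirling2_eq_zero n (n+1) (by omega), stirling2_self n]

lemma stirling2_le : ∀ n : ℕ, ∀ k : ℕ, k ≤ n → stirling2 n k ≤ 2 ^ n * k ^ (n - k)
  | 0, 0, _ => by simp [stirling2]
  | n + 1, 0, _ => by simp [stirling2]
  | n + 1, k + 1, h => by
    rcases eq_or_lt_of_le h with heq | hlt
    · rw [← heq, stirling2_self]
      simp
      exact Nat.one_le_two_pow
    · have hk : k + 1 ≤ n := by omega
      have ih1 := stirling2_le n (k+1) hk
      have ih2 := stirling2_le n k (by omega)
      show (k + 1) * stirling2 n (k + 1) + stirling2 n k ≤ _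
      have e1 : (k+1) * (2^n * (k+1)^(n-(k+1))) = 2^n * (k+1)^(n-k) := by
        have : n - k = (n - (k+1)) + 1 := by omega
        rw [this, pow_succ]; ring
      calc (k + 1) * stirling2 n (k + 1) + stirling2 n k
          ≤ (k+1) * (2^n * (k+1)^(n-(k+1))) + 2^n * k^(n-k) :=
            Nat.add_le_add (Nat.mul_le_mul_left _ ih1) ih2
        _ ≤ 2^n * (k+1)^(n-k) + 2^n * (k+1)^(n-k) := by
            rw [e1]
            exact Nat.add_le_add_left (Nat.mul_le_mul_left _
              (Nat.pow_le_pow_left (by omega) _)) _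
        _ = 2^(n+1) * (k+1)^(n-k) := by ring
        _ = 2^(n+1) * (k+1)^((n+1)-(k+1)) := by rw [Nat.succ_sub_succ]

lemma fact_bound : ∀ p k : ℕ, p ≤ k → p.factorial * (p+1)^(k-p) ≤ k.factorial := by
  intro p k h
  induction k, h using Nat.le_induction with
  | base => simp
  | succ k hk ih =>
    have : k + 1 - p = (k - p) + 1 := by omega
    rw [this, pow_succ, ← mul_assoc]
    calc p.factorial * (p+1)^(k-p) * (p+1) ≤ k.factorial * (p+1) :=
          Nat.mul_le_mul_right _ ih
      _ ≤ k.factorial * (k+1) := Nat.mul_le_mul_left _ (by omega)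
      _ = (k+1).factorial := (Nat.factorial_succ _).symm ▸ (mul_comm _ _)

lemma key_nat (p k : ℕ) (h : p ≤ k) :
    p.factorial * stirling2 (k+1) (p+1) ≤ 2^(k+1) * k.factorial := by
  calc p.factorial * stirling2 (k+1) (p+1)
      ≤ p.factorial * (2^(k+1) * (p+1)^((k+1)-(p+1))) :=
        Nat.mul_le_mul_left _ (stirling2_le (k+1) (p+1) (by omega))
    _ = 2^(k+1) * (p.factorial * (p+1)^(k-p)) := by rw [Nat.succ_sub_succ]; ring
    _ ≤ 2^(k+1) * k.factorial := Nat.mul_le_mul_left _ (fact_bound p k h)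


/-- Lemma 3.1 (second part): Stirling-number tail estimate. -/
theorem tail_stirling_estimate (M : ℕ → ℝ) (hM : ∀ p, 0 < M p)
    (hconv : ∀ ℓ : ℝ, 0 < ℓ → Summable (fun k : ℕ => (Nat.factorial k : ℝ) * ℓ ^ k / M k))
    (htail : ∀ ℓ : ℝ, 0 < ℓ → ∃ C : ℝ, 0 < C ∧ ∀ p : ℕ,
      (∑' k : ℕ, if p ≤ k then (Nat.factorial k : ℝ) * ℓ ^ k / M k else 0)
        ≤ C * ((Nat.factorial p : ℝ) * ℓ ^ p / M p)) :
    ∀ ℓ : ℝ, 0 < ℓ → ∃ C : ℝ, 0 < C ∧ ∀ p : ℕ,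
      (∑' k : ℕ, if p ≤ k then (stirling2 (k + 1) (p + 1) : ℝ) * ℓ ^ k / M k else 0)
        ≤ C * (2 * ℓ) ^ p / M p := by
  intro ℓ hℓ
  obtain ⟨C, hC, hCt⟩ := htail (2 * ℓ) (by positivity)
  refine ⟨2 * C, by positivity, fun p => ?_⟩
  have hpfac : (0 : ℝ) < p.factorial := by positivity
  have hpne : (p.factorial : ℝ) ≠ 0 := hpfac.ne'
  -- the comparison series
  set g : ℕ → ℝ := fun k =>
    if p ≤ k then (2 / p.factorial) * ((Nat.factorial k : ℝ) * (2*ℓ) ^ k / M k) else 0 with hg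
  have hsum2 : Summable (fun k : ℕ => (Nat.factorial k : ℝ) * (2*ℓ) ^ k / M k) :=
    hconv _ (by positivity)
  have hgsum : Summable g := by
    have := (hsum2.mul_left ((2:ℝ) / p.factorial))
    apply Summable.of_nonneg_of_le (fun k => ?_) (fun k => ?_) this
    · rw [hg]; dsimp only
      split
      · exact mul_nonneg (by positivity) (div_nonneg (by positivity) (hM _).le)
      · exact le_rfl
    · rw [hg]; dsimp only
      split
      · exact le_rfl
      · exact mul_nonneg (by positivity) (div_nonneg (by positivity) (hM _).le)
  have hle : ∀ k : ℕ,
      (if p ≤ k then (stirling2 (k + 1) (p + 1) : ℝ) * ℓ ^ k / M k else 0) ≤ g k := by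
    intro k
    rw [hg]; dsimp only
    split
    · rename_i hpk
      have hMk := hM k
      have hS : (stirling2 (k+1) (p+1) : ℝ) ≤ 2^(k+1) * k.factorial / p.factorial := by
        rw [le_div_iff₀ hpfac]
        have := key_nat p k hpk
        have : (p.factorial * stirling2 (k+1) (p+1) : ℝ) ≤ 2^(k+1) * k.factorial := by
          exact_mod_cast this
        linarith [this]
      have hrw : (2 / p.factorial) * ((Nat.factorial k : ℝ) * (2*ℓ) ^ k / M k)
          = (2^(k+1) * k.factorial / p.factorial) * ℓ ^ k / M k := by
        rw [mul_pow]
        field_simp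
        ring
      rw [hrw]
      gcongr
    · exact le_rfl
  have hLsum : Summable (fun k : ℕ =>
      if p ≤ k then (stirling2 (k + 1) (p + 1) : ℝ) * ℓ ^ k / M k else 0) := by
    apply Summable.of_nonneg_of_le (fun k => ?_) hle hgsum
    split
    · exact div_nonneg (by positivity) (hM _).le
    · exact le_rfl
  have step1 := Summable.tsum_le_tsum hle hLsum hgsum
  have step2 : ∑' k, g k = (2 / p.factorial) *
      ∑' k, (if p ≤ k then (Nat.factorial k : ℝ) * (2*ℓ) ^ k / M k else 0) := by
    rw [← tsum_mul_left]
    congr 1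
    funext k
    rw [hg]; dsimp only
    split <;> simp
  have step3 := hCt p
  calc (∑' k : ℕ, if p ≤ k then (stirling2 (k + 1) (p + 1) : ℝ) * ℓ ^ k / M k else 0)
      ≤ ∑' k, g k := step1
    _ = (2 / p.factorial) *
        ∑' k, (if p ≤ k then (Nat.factorial k : ℝ) * (2*ℓ) ^ k / M k else 0) := step2
    _ ≤ (2 / p.factorial) * (C * ((Nat.factorial p : ℝ) * (2*ℓ) ^ p / M p)) := by
        gcongr
    _ = 2 * C * (2 * ℓ) ^ p / M p := by
        field_simp
end

section
/- Let L : (0,∞) → (0,∞) be slowly varying at infinity, i.e., L(ax)/L(x) → 1 as x → ∞ for every a > 0, and let c > 0. Suppose f₀ : ℝ → ℝ is continuous with support in (e,∞) and f₀(x) ~ c·L(x)/x as x → ∞. Define b(x) = ∫₁^x f₀(t) dt. Then for every a > 0, b(ax) − b(x) = c·L(x)·log a + o(L(x)) as x → ∞, uniformly for a in compact subsets of (0,∞). -/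
open Filter Topology

lemma uct_baire (h : ℝ → ℝ) (T₀ : ℝ) (hcont : ContinuousOn h (Set.Ici T₀))
    (hpt : ∀ s : ℝ, Tendsto (fun t => h (t + s) - h t) atTop (𝓝 0))
    (ε : ℝ) (hε : 0 < ε) :
    ∃ δ > 0, ∃ T, ∀ t ≥ T, ∀ s ∈ Set.Icc 0 δ, |h (t + s) - h t| ≤ ε := by
  haveI : CompleteSpace (Set.Icc (0:ℝ) 1) := isClosed_Icc.completeSpace_coe
  set F : ℕ → Set (Set.Icc (0:ℝ) 1) := fun n =>
    {s | ∀ t : ℝ, max T₀ n ≤ t → |h (t + s) - h t| ≤ ε/2} with hF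
  have hFclosed : ∀ n, IsClosed (F n) := by
    intro n
    have heq : F n = ⋂ t : {t : ℝ // max T₀ n ≤ t},
        {s : Set.Icc (0:ℝ) 1 | |h (t.1 + s) - h t.1| ≤ ε/2} := by
      ext s; simp [hF, Set.mem_iInter, Subtype.forall]
    rw [heq]
    refine isClosed_iInter fun t => ?_
    have h1 : Continuous (fun s : Set.Icc (0:ℝ) 1 => h (t.1 + (s : ℝ))) := by
      apply hcont.comp_continuous (by continuity)
      intro s
      have h2 := s.2.1
      have h3 := t.2
      have h4 := le_max_left T₀ (n:ℝ)
      simp only [Set.mem_Ici]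
      linarith
    exact isClosed_le ((h1.sub continuous_const).abs) continuous_const
  have hcover : ⋃ n, F n = Set.univ := by
    ext s
    simp only [Set.mem_iUnion, Set.mem_univ, iff_true]
    obtain ⟨N, hN⟩ := Metric.tendsto_atTop.mp (hpt s) (ε/2) (by linarith)
    obtain ⟨n, hn⟩ := exists_nat_ge N
    refine ⟨n, fun t ht => ?_⟩
    have := hN t (le_trans hn (le_trans (le_max_right T₀ n) ht))
    rw [Real.dist_eq, sub_zero] at this
    exact this.le
  obtain ⟨n, s₀, hs₀⟩ := nonempty_interior_of_iUnion_of_closed hFclosed hcover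
  rw [mem_interior_iff_mem_nhds, Metric.mem_nhds_iff] at hs₀
  obtain ⟨r, hr, hball⟩ := hs₀
  set δ : ℝ := min (r/2) (1/2) with hδdef
  have hδ : 0 < δ := lt_min (by linarith) (by norm_num)
  have hδ2 : δ ≤ r/2 := min_le_left _ _
  have hδ3 : δ ≤ 1/2 := min_le_right _ _
  have hs₀0 : (0:ℝ) ≤ s₀ := s₀.2.1
  have hs₀1 : (s₀ : ℝ) ≤ 1 := s₀.2.2
  -- choose α
  obtain ⟨α, hα0, hαδ, hαr⟩ : ∃ α : ℝ, 0 ≤ α ∧ α + δ ≤ 1 ∧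
      ∀ u : ℝ, α ≤ u → u ≤ α + δ → |u - (s₀:ℝ)| < r := by
    rcases le_or_gt (s₀:ℝ) (1/2) with hcase | hcase
    · exact ⟨s₀, hs₀0, by linarith, fun u h1 h2 => by
        rw [abs_lt]; constructor <;> linarith⟩
    · exact ⟨(s₀:ℝ) - δ, by linarith, by linarith, fun u h1 h2 => by
        rw [abs_lt]; constructor <;> linarith⟩
  have key : ∀ u : ℝ, α ≤ u → u ≤ α + δ → ∀ t : ℝ, max T₀ n ≤ t →
      |h (t + u) - h t| ≤ ε/2 := by
    intro u h1 h2 t ht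
    have hu01 : u ∈ Set.Icc (0:ℝ) 1 := ⟨le_trans hα0 h1, le_trans h2 hαδ⟩
    have hmem : (⟨u, hu01⟩ : Set.Icc (0:ℝ) 1) ∈ F n := by
      apply hball
      rw [Metric.mem_ball, Subtype.dist_eq, Real.dist_eq]
      exact hαr u h1 h2
    exact hmem t ht
  refine ⟨δ, hδ, max T₀ n, fun t ht s hs => ?_⟩
  have e1 : |h (t + s + α) - h t| ≤ ε/2 := by
    have := key (α + s) (by linarith [hs.1]) (by linarith [hs.2]) t ht
    rwa [show t + (α + s) = t + s + α by ring] at this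
  have e2 : |h (t + s + α) - h (t + s)| ≤ ε/2 := key α le_rfl (by linarith) (t + s)
    (by linarith [hs.1])
  calc |h (t + s) - h t|
      = |(h (t + s + α) - h t) - (h (t + s + α) - h (t + s))| := by ring_nf
    _ ≤ |h (t + s + α) - h t| + |h (t + s + α) - h (t + s)| := abs_sub _ _
    _ ≤ ε/2 + ε/2 := add_le_add e1 e2
    _ = ε := by ring

lemma uct (h : ℝ → ℝ) (T₀ : ℝ) (hcont : ContinuousOn h (Set.Ici T₀))
    (hpt : ∀ s : ℝ, Tendsto (fun t => h (t + s) - h t) atTop (𝓝 0))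
    (S ε : ℝ) (hε : 0 < ε) :
    ∃ T, ∀ t ≥ T, ∀ s ∈ Set.Icc 0 S, |h (t + s) - h t| ≤ ε := by
  obtain ⟨δ, hδ, T₁, hT₁⟩ := uct_baire h T₀ hcont hpt (ε/2) (by linarith)
  have key : ∀ k : ℕ, ∃ T, ∀ t ≥ T, ∀ s ∈ Set.Icc 0 ((k:ℝ) * δ), |h (t + s) - h t| ≤ ε := by
    intro k
    induction k with
    | zero =>
      refine ⟨0, fun t _ s hs => ?_⟩
      have : s = 0 := le_antisymm (by simpa using hs.2) hs.1
      simp [this, abs_nonneg, le_of_lt hε]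
    | succ k ih =>
      obtain ⟨T, hT⟩ := ih
      obtain ⟨N, hN⟩ := Metric.tendsto_atTop.mp (hpt ((k:ℝ) * δ)) (ε/2) (by linarith)
      refine ⟨max (max T T₁) N, fun t ht s hs => ?_⟩
      have ht1 : T₁ ≤ t := le_trans (le_trans (le_max_right T T₁) (le_max_left _ N)) ht
      have ht2 : T ≤ t := le_trans (le_trans (le_max_left T T₁) (le_max_left _ N)) ht
      have ht3 : N ≤ t := le_trans (le_max_right _ N) ht
      rcases le_or_gt s ((k:ℝ) * δ) with hcase | hcase
      · exact hT t ht2 s ⟨hs.1, hcase⟩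
      · have h1 : |h (t + (k:ℝ) * δ + (s - (k:ℝ) * δ)) - h (t + (k:ℝ) * δ)| ≤ ε/2 := by
          apply hT₁ (t + (k:ℝ) * δ) (by nlinarith [Nat.cast_nonneg (α := ℝ) k, hδ.le])
          constructor
          · linarith
          · push_cast at hs; linarith [hs.2]
        have h2 : |h (t + (k:ℝ) * δ) - h t| ≤ ε/2 := by
          have := hN t ht3
          rw [Real.dist_eq, sub_zero] at this
          exact this.le
        have harg : t + (k:ℝ) * δ + (s - (k:ℝ) * δ) = t + s := by ring
        rw [harg] at h1
        calc |h (t + s) - h t| = |(h (t + s) - h (t + (k:ℝ)*δ)) + (h (t + (k:ℝ)*δ) - h t)| := by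
              ring_nf
          _ ≤ |h (t + s) - h (t + (k:ℝ)*δ)| + |h (t + (k:ℝ)*δ) - h t| := abs_add_le _ _
          _ ≤ ε/2 + ε/2 := add_le_add h1 h2
          _ = ε := by ring
  obtain ⟨n, hn⟩ := exists_nat_ge (S / δ)
  obtain ⟨T, hT⟩ := key n
  refine ⟨T, fun t ht s hs => ?_⟩
  apply hT t ht
  refine ⟨hs.1, le_trans hs.2 ?_⟩
  rw [div_le_iff₀ hδ] at hn
  linarith

lemma uct_mul (P : ℝ → ℝ) (X₀ : ℝ) (hX₀ : 1 ≤ X₀) (hcont : Continuous P)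
    (hpos : ∀ x, X₀ ≤ x → 0 < P x)
    (hSVP : ∀ a : ℝ, 0 < a → Tendsto (fun x => P (a * x) / P x) atTop (𝓝 1))
    (A : ℝ) (hA : 1 ≤ A) (ε : ℝ) (hε : 0 < ε) :
    ∃ X, X₀ ≤ X ∧ ∀ x, X ≤ x → ∀ a ∈ Set.Icc A⁻¹ A, |P (a * x) - P x| ≤ ε * P x := by
  have hX₀pos : (0:ℝ) < X₀ := lt_of_lt_of_le one_pos hX₀
  set T₀ : ℝ := Real.log X₀ with hT₀
  have hexpT₀ : Real.exp T₀ = X₀ := Real.exp_log hX₀pos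
  set h : ℝ → ℝ := fun t => Real.log (P (Real.exp t)) with hh
  have hPpos : ∀ t : ℝ, T₀ ≤ t → 0 < P (Real.exp t) := by
    intro t ht
    exact hpos _ (by rw [← hexpT₀]; exact Real.exp_le_exp.mpr ht)
  have hhc : ContinuousOn h (Set.Ici T₀) := by
    intro t ht
    apply ContinuousAt.continuousWithinAt
    have hc2 : ContinuousAt (fun t => P (Real.exp t)) t :=
      (hcont.comp Real.continuous_exp).continuousAt
    exact hc2.log (ne_of_gt (hPpos t ht))
  have hpt : ∀ s : ℝ, Tendsto (fun t => h (t + s) - h t) atTop (𝓝 0) := by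
    intro s
    have h1 : Tendsto (fun t : ℝ => P (Real.exp s * Real.exp t) / P (Real.exp t))
        atTop (𝓝 1) := (hSVP (Real.exp s) (Real.exp_pos s)).comp Real.tendsto_exp_atTop
    have h2 : Tendsto (fun t : ℝ => Real.log (P (Real.exp s * Real.exp t) / P (Real.exp t)))
        atTop (𝓝 0) := by
      have := (Real.continuousAt_log one_ne_zero).tendsto
      rw [Real.log_one] at this
      exact this.comp h1
    apply h2.congr'
    filter_upwards [eventually_ge_atTop (max T₀ (T₀ - s))] with t ht
    have ht1 : T₀ ≤ t := le_trans (le_max_left _ _) ht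
    have ht2 : T₀ ≤ t + s := by have := le_trans (le_max_right _ _) ht; linarith
    have p1 : 0 < P (Real.exp t) := hPpos t ht1
    have p2 : 0 < P (Real.exp s * Real.exp t) := by
      rw [← Real.exp_add]; exact hPpos _ (by rwa [add_comm])
    rw [Real.log_div (ne_of_gt p2) (ne_of_gt p1)]
    simp only [hh, Real.exp_add, mul_comm]
  set ε' : ℝ := Real.log (1 + ε) with hε'
  have hε'pos : 0 < ε' := Real.log_pos (by linarith)
  obtain ⟨T, hT⟩ := uct h T₀ hhc hpt (Real.log A) ε' hε'pos
  have hlogA : 0 ≤ Real.log A := Real.log_nonneg hA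
  set X : ℝ := max (A * X₀) (Real.exp (T + Real.log A)) with hX
  refine ⟨max X X₀, le_max_right _ _, fun x hx a ha => ?_⟩
  have hxX₀ : X₀ ≤ x := le_trans (le_max_right _ _) hx
  have hxpos : 0 < x := lt_of_lt_of_le hX₀pos hxX₀
  have hxAX₀ : A * X₀ ≤ x := le_trans (le_trans (le_max_left _ _) (le_max_left X X₀)) hx
  have hxT : Real.exp (T + Real.log A) ≤ x :=
    le_trans (le_trans (le_max_right _ _) (le_max_left X X₀)) hx
  have hApos : 0 < A := lt_of_lt_of_le one_pos hA
  have hapos : 0 < a := lt_of_lt_of_le (inv_pos.mpr hApos) ha.1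
  -- t := log x
  set t : ℝ := Real.log x with htdef
  have hext : Real.exp t = x := Real.exp_log hxpos
  have htT : T + Real.log A ≤ t := by
    rw [← Real.exp_le_exp, hext]; exact hxT
  set s : ℝ := Real.log a with hsdef
  have hexs : Real.exp s = a := Real.exp_log hapos
  have hsA : |s| ≤ Real.log A := by
    rw [abs_le]
    constructor
    · rw [hsdef, ← Real.log_inv]
      exact Real.log_le_log (by positivity) ha.1
    · exact Real.log_le_log hapos ha.2
  -- |h(t+s) - h t| ≤ ε'
  have hax : a * x = Real.exp (t + s) := by rw [Real.exp_add, hext, hexs]; ring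
  have hbound : |h (t + s) - h t| ≤ ε' := by
    rcases le_or_gt 0 s with hs0 | hs0
    · apply hT t (by linarith) s ⟨hs0, le_trans (le_abs_self s) hsA⟩
    · have := hT (t + s) (by rw [abs_le] at hsA; linarith [hsA.1]) (-s)
        ⟨by linarith, le_trans (neg_le_abs s) hsA⟩
      rw [show t + s + -s = t by ring] at this
      rw [abs_sub_comm]
      exact this
  -- transfer
  have hPx : 0 < P x := hpos x hxX₀
  have hPax : 0 < P (a * x) := by
    apply hpos
    calc X₀ = A⁻¹ * (A * X₀) := by field_simp
      _ ≤ a * x := by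
          apply mul_le_mul ha.1 hxAX₀ (by positivity) (le_of_lt hapos)
  have hhts : h (t + s) = Real.log (P (a * x)) := by rw [hh]; simp only []; rw [← hax]
  have hht : h t = Real.log (P x) := by rw [hh]; simp only []; rw [hext]
  rw [hhts, hht, abs_le] at hbound
  have hup : P (a * x) ≤ (1 + ε) * P x := by
    have h1 : Real.log (P (a * x)) ≤ Real.log ((1 + ε) * P x) := by
      rw [Real.log_mul (by linarith) (ne_of_gt hPx)]
      linarith [hbound.2, hε'.le, hε'.ge]
    exact (Real.log_le_log_iff hPax (by positivity)).mp h1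
  have hdown : (1 - ε) * P x ≤ P (a * x) := by
    have h1 : Real.log (P x / (1 + ε)) ≤ Real.log (P (a * x)) := by
      rw [Real.log_div (ne_of_gt hPx) (by linarith)]
      linarith [hbound.1, hε'.le, hε'.ge]
    have h2 : P x / (1 + ε) ≤ P (a * x) :=
      (Real.log_le_log_iff (by positivity) hPax).mp h1
    have h3 : (1 - ε) * P x ≤ P x / (1 + ε) := by
      rw [le_div_iff₀ (by linarith)]
      nlinarith [hPx.le, sq_nonneg ε]
    exact le_trans h3 h2
  rw [abs_le]
  constructor <;> nlinarith

set_option maxHeartbeats 1000000 in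
/-- If f₀ is continuous, supported in (e,∞), with f₀(x) ~ c·L(x)/x at infinity, and
b(x) = ∫₁ˣ f₀, then b(ax) − b(x) = c·L(x)·log a + o(L(x)), uniformly for a in compact
subsets of (0,∞). -/
theorem primitive_de_haan (L : ℝ → ℝ) (hLpos : ∀ x : ℝ, 0 < x → 0 < L x)
    (hSV : ∀ a : ℝ, 0 < a → Tendsto (fun x => L (a * x) / L x) atTop (nhds 1))
    (c : ℝ) (hc : 0 < c) (f₀ : ℝ → ℝ) (hf₀ : Continuous f₀)
    (hsupp : Function.support f₀ ⊆ Set.Ioi (Real.exp 1))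
    (hasymp : Tendsto (fun x => f₀ x * x / (c * L x)) atTop (nhds 1))
    (b : ℝ → ℝ) (hb : ∀ x : ℝ, b x = ∫ t in (1:ℝ)..x, f₀ t) :
    ∀ K : Set ℝ, IsCompact K → K ⊆ Set.Ioi 0 →
      ∀ ε : ℝ, 0 < ε → ∃ X : ℝ, ∀ x : ℝ, X ≤ x → ∀ a ∈ K,
        |b (a * x) - b x - c * L x * Real.log a| ≤ ε * L x := by
  intro K hK hKpos ε hε
  rcases K.eq_empty_or_nonempty with hKe | hKne
  · exact ⟨0, fun x _ a ha => by simp [hKe] at ha⟩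
  obtain ⟨m, hm⟩ := hK.exists_isLeast hKne
  obtain ⟨M, hM⟩ := hK.exists_isGreatest hKne
  have hmpos : 0 < m := hKpos hm.1
  set A : ℝ := max 2 (max M m⁻¹) with hAdef
  have hA2 : 2 ≤ A := le_max_left _ _
  have hA1 : 1 ≤ A := by linarith
  have hApos : 0 < A := by linarith
  have hAinvpos : 0 < A⁻¹ := inv_pos.mpr hApos
  have hAinv1 : A⁻¹ ≤ 1 := by simpa using inv_anti₀ one_pos hA1
  have hKsub : K ⊆ Set.Icc A⁻¹ A := by
    intro a ha
    constructor
    · have h1 : m⁻¹ ≤ A := le_trans (le_max_right M m⁻¹) (le_max_right 2 _)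
      have h2 : A⁻¹ ≤ m := by
        rw [← inv_inv m]
        exact inv_anti₀ (by positivity) h1
      exact le_trans h2 (hm.2 ha)
    · exact le_trans (hM.2 ha) (le_trans (le_max_left M m⁻¹) (le_max_right 2 _))
  -- P
  set P : ℝ → ℝ := fun x => x * f₀ x / c with hP
  have hPcont : Continuous P := (continuous_id.mul hf₀).div_const c
  have hasymp' : Tendsto (fun x => P x / L x) atTop (𝓝 1) := by
    apply hasymp.congr
    intro x
    rw [hP, div_div]
    ring_nf
  -- X₀
  have hev : ∀ᶠ x in atTop, 1/2 < P x / L x :=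
    hasymp'.eventually (eventually_gt_nhds (by norm_num))
  obtain ⟨X₀', hX₀'⟩ := eventually_atTop.mp hev
  set X₀ : ℝ := max X₀' 1 with hX₀def
  have hX₀1 : (1:ℝ) ≤ X₀ := le_max_right _ _
  have hPpos : ∀ x, X₀ ≤ x → 0 < P x := by
    intro x hx
    have h1 := hX₀' x (le_trans (le_max_left _ _) hx)
    have hLx := hLpos x (by linarith [le_trans hX₀1 hx])
    have h2 : P x = (P x / L x) * L x := (div_mul_cancel₀ _ (ne_of_gt hLx)).symm
    nlinarith
  -- hSVP
  have hSVP : ∀ a : ℝ, 0 < a → Tendsto (fun x => P (a * x) / P x) atTop (𝓝 1) := by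
    intro a ha
    have hmul : Tendsto (fun x : ℝ => a * x) atTop atTop :=
      Tendsto.const_mul_atTop ha tendsto_id
    have h1 : Tendsto (fun x => P (a * x) / L (a * x)) atTop (𝓝 1) := hasymp'.comp hmul
    have h2 := hSV a ha
    have h3 : Tendsto (fun x => L x / P x) atTop (𝓝 1) := by
      have h4 := hasymp'.inv₀ one_ne_zero
      simp only [inv_div, inv_one] at h4
      exact h4
    have h5 := (h1.mul h2).mul h3
    rw [show (1:ℝ) * 1 * 1 = 1 by norm_num] at h5
    apply h5.congr'
    filter_upwards [eventually_ge_atTop (max X₀ (X₀ / a)), eventually_gt_atTop 0]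
      with x hx hx0
    have hax : X₀ ≤ a * x := by
      have h6 : X₀ / a ≤ x := le_trans (le_max_right _ _) hx
      rw [div_le_iff₀ ha] at h6
      linarith [h6]
    have hLax : L (a * x) ≠ 0 := ne_of_gt (hLpos _ (mul_pos ha hx0))
    have hLx : L x ≠ 0 := ne_of_gt (hLpos _ hx0)
    have hPx : P x ≠ 0 := ne_of_gt (hPpos x (le_trans (le_max_left _ _) hx))
    field_simp
  -- constants
  set D : ℝ := A * (A - 1) with hDdef
  have hD2 : 2 ≤ D := by nlinarith
  have hD0 : (0:ℝ) < D := by linarith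
  have h4cD : (0:ℝ) < 4 * c * D := by positivity
  set ε₁ : ℝ := ε / (4 * c * D) with hε₁def
  have hε₁pos : 0 < ε₁ := div_pos hε h4cD
  set ε₂ : ℝ := min 1 (ε / (4 * c * D)) with hε₂def
  have hε₂pos : 0 < ε₂ := lt_min one_pos (div_pos hε h4cD)
  have hε₂1 : ε₂ ≤ 1 := min_le_left _ _
  have hε₂ε : ε₂ ≤ ε / (4 * c * D) := min_le_right _ _
  obtain ⟨X₁, hX₁X₀, hX₁⟩ := uct_mul P X₀ hX₀1 hPcont hPpos hSVP A hA1 ε₁ hε₁pos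
  obtain ⟨X₂, hX₂⟩ := eventually_atTop.mp
    (hasymp'.eventually (Metric.closedBall_mem_nhds (1:ℝ) hε₂pos))
  set X : ℝ := max (max X₁ X₂) (A * X₀) with hXdef
  refine ⟨X, fun x hx a haK => ?_⟩
  have ha := hKsub haK
  have hapos : 0 < a := lt_of_lt_of_le hAinvpos ha.1
  have hxX₁ : X₁ ≤ x := le_trans (le_trans (le_max_left _ _) (le_max_left _ _)) hx
  have hxX₂ : X₂ ≤ x := le_trans (le_trans (le_max_right _ _) (le_max_left _ _)) hx
  have hxAX₀ : A * X₀ ≤ x := le_trans (le_max_right _ _) hx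
  have hxX₀ : X₀ ≤ x := le_trans hX₁X₀ hxX₁
  have hxpos : 0 < x := by linarith [le_trans hX₀1 hxX₀]
  have hLx : 0 < L x := hLpos x hxpos
  have hPx : 0 < P x := hPpos x hxX₀
  have hAxpos : 0 < A⁻¹ * x := mul_pos hAinvpos hxpos
  -- membership bounds on the interval
  have e1 : A⁻¹ * x ≤ x := by nlinarith
  have e2 : A⁻¹ * x ≤ a * x := by nlinarith [ha.1]
  have e3 : a * x ≤ A * x := by nlinarith [ha.2]
  have e4 : x ≤ A * x := by nlinarith
  have hmem : ∀ t ∈ Set.uIcc x (a * x), 0 < t ∧ A⁻¹ * x ≤ t ∧ t ≤ A * x := by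
    intro t ht
    rw [Set.mem_uIcc] at ht
    rcases ht with ⟨h1, h2⟩ | ⟨h1, h2⟩ <;>
      exact ⟨by linarith, by linarith, by linarith⟩
  have h0notin : (0:ℝ) ∉ Set.uIcc x (a * x) := by
    intro h0
    have := (hmem 0 h0).2.1
    linarith
  -- b difference as integral
  have hbb : b (a * x) - b x = ∫ t in x..(a * x), f₀ t := by
    rw [hb, hb]
    exact intervalIntegral.integral_interval_sub_left
      (hf₀.intervalIntegrable 1 (a * x)) (hf₀.intervalIntegrable 1 x)
  -- equality of integrands
  have hieq : (∫ t in x..(a * x), f₀ t) = ∫ t in x..(a * x), c * (P t / t) := by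
    apply intervalIntegral.integral_congr
    intro t ht
    have htpos := (hmem t ht).1
    show f₀ t = c * (P t / t)
    rw [hP]
    simp only
    field_simp
  -- integrability
  have hcont1 : ContinuousOn (fun t => c * (P t / t)) (Set.uIcc x (a * x)) := by
    apply ContinuousOn.mul continuousOn_const
    apply ContinuousOn.div hPcont.continuousOn continuousOn_id
    intro t ht
    exact ne_of_gt (hmem t ht).1
  have hcont2 : ContinuousOn (fun t => c * P x * (1 / t)) (Set.uIcc x (a * x)) := by
    apply ContinuousOn.mul continuousOn_const
    apply ContinuousOn.div continuousOn_const continuousOn_id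
    intro t ht
    exact ne_of_gt (hmem t ht).1
  have hint1 : IntervalIntegrable (fun t => c * (P t / t)) MeasureTheory.volume x (a * x) :=
    hcont1.intervalIntegrable
  have hint2 : IntervalIntegrable (fun t => c * P x * (1 / t)) MeasureTheory.volume x (a * x) :=
    hcont2.intervalIntegrable
  -- log formula
  have hlog : (∫ t in x..(a * x), c * P x * (1 / t)) = c * P x * Real.log a := by
    rw [intervalIntegral.integral_const_mul, integral_one_div h0notin]
    congr 1
    rw [mul_div_assoc, div_self (ne_of_gt hxpos), mul_one]
  -- main difference bound
  have hdiff : |(∫ t in x..(a * x), c * (P t / t)) - c * P x * Real.log a|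
      ≤ c * ε₁ * P x * D := by
    rw [← hlog, ← intervalIntegral.integral_sub hint1 hint2]
    have hCbound : ∀ t ∈ Set.uIoc x (a * x),
        ‖c * (P t / t) - c * P x * (1 / t)‖ ≤ c * ε₁ * P x / (A⁻¹ * x) := by
      intro t ht
      obtain ⟨htpos, htl, htu⟩ := hmem t (Set.uIoc_subset_uIcc ht)
      have htx : t / x ∈ Set.Icc A⁻¹ A := by
        constructor
        · rw [le_div_iff₀ hxpos]; linarith
        · rw [div_le_iff₀ hxpos]; linarith
      have hPt : |P t - P x| ≤ ε₁ * P x := by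
        have := hX₁ x hxX₁ (t / x) htx
        rwa [div_mul_cancel₀ t (ne_of_gt hxpos)] at this
      have heq : c * (P t / t) - c * P x * (1 / t) = c * (P t - P x) / t := by
        field_simp
      rw [heq, Real.norm_eq_abs, abs_div, abs_of_pos htpos, abs_mul, abs_of_pos hc]
      rw [div_le_div_iff₀ htpos hAxpos]
      nlinarith [mul_le_mul (mul_le_mul_of_nonneg_left hPt hc.le) htl hAxpos.le
        (mul_nonneg hc.le (mul_nonneg hε₁pos.le hPx.le))]
    have hnorm := intervalIntegral.norm_integral_le_of_norm_le_const hCbound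
    rw [Real.norm_eq_abs] at hnorm
    apply le_trans hnorm
    have h7 : |a * x - x| ≤ (A - 1) * x := by
      rw [show a * x - x = (a - 1) * x by ring, abs_mul, abs_of_pos hxpos]
      apply mul_le_mul_of_nonneg_right _ hxpos.le
      rw [abs_le]
      exact ⟨by linarith [ha.1], by linarith [ha.2]⟩
    rw [div_mul_eq_mul_div, div_le_iff₀ hAxpos]
    have h8 : c * ε₁ * P x * D * (A⁻¹ * x) = c * ε₁ * P x * ((A - 1) * x) := by
      rw [hDdef]
      field_simp
    rw [h8]
    exact mul_le_mul_of_nonneg_left h7 (by positivity)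
  -- transfer P x → L x
  have hPLx : |P x - L x| ≤ ε₂ * L x := by
    have h1 := hX₂ x hxX₂
    rw [Real.dist_eq] at h1
    have h2 : P x - L x = (P x / L x - 1) * L x := by field_simp
    rw [h2, abs_mul, abs_of_pos hLx]
    exact mul_le_mul_of_nonneg_right h1 hLx.le
  have hloga : |Real.log a| ≤ A - 1 := by
    have h1 : |Real.log a| ≤ Real.log A := by
      rw [abs_le]
      constructor
      · rw [← Real.log_inv]
        exact Real.log_le_log hAinvpos ha.1
      · exact Real.log_le_log hapos ha.2
    linarith [Real.log_le_sub_one_of_pos hApos]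
  have hPxle : P x ≤ 2 * L x := by
    rw [abs_le] at hPLx
    nlinarith
  -- combine
  rw [hbb, hieq]
  have hsplit : |(∫ t in x..(a * x), c * (P t / t)) - c * L x * Real.log a|
      ≤ c * ε₁ * P x * D + c * (ε₂ * L x) * (A - 1) := by
    have h1 : (∫ t in x..(a * x), c * (P t / t)) - c * L x * Real.log a
        = ((∫ t in x..(a * x), c * (P t / t)) - c * P x * Real.log a)
          + c * (P x - L x) * Real.log a := by ring
    rw [h1]
    apply le_trans (abs_add_le _ _)
    apply add_le_add hdiff
    rw [abs_mul, abs_mul, abs_of_pos hc]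
    have hloga0 : 0 ≤ |Real.log a| := abs_nonneg _
    calc c * |P x - L x| * |Real.log a| ≤ c * (ε₂ * L x) * |Real.log a| := by
          apply mul_le_mul_of_nonneg_right _ hloga0
          exact mul_le_mul_of_nonneg_left hPLx hc.le
      _ ≤ c * (ε₂ * L x) * (A - 1) := by
          apply mul_le_mul_of_nonneg_left hloga
          positivity
  apply le_trans hsplit
  -- arithmetic
  have hAD : A - 1 ≤ D := by nlinarith
  have t1 : c * ε₁ * P x * D ≤ ε / 2 * L x := by
    have h2 : c * ε₁ * P x * D = ε / 4 * P x := by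
      rw [hε₁def]
      field_simp
    rw [h2]
    nlinarith [mul_le_mul_of_nonneg_left hPxle (by linarith : (0:ℝ) ≤ ε / 4)]
  have t2 : c * (ε₂ * L x) * (A - 1) ≤ ε / 4 * L x := by
    have h2a : ε₂ * (A - 1) ≤ ε₂ * D := mul_le_mul_of_nonneg_left hAD hε₂pos.le
    have h2b : ε₂ * D ≤ ε / (4 * c * D) * D := mul_le_mul_of_nonneg_right hε₂ε hD0.le
    have h2c : ε / (4 * c * D) * D = ε / (4 * c) := by
      field_simp
    calc c * (ε₂ * L x) * (A - 1) = c * L x * (ε₂ * (A - 1)) := by ring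
      _ ≤ c * L x * (ε / (4 * c)) := by
          apply mul_le_mul_of_nonneg_left _ (mul_nonneg hc.le hLx.le)
          linarith
      _ = ε / 4 * L x := by field_simp
  linarith [t1, t2, mul_pos hε hLx]
end

section
/- Let L be slowly varying at infinity and let (g_m) be continuous functions on ℝ∖{0} supported in {|x| > e} such that the limits lim_{x→±∞} g_m(x)/(x^m L(|x|)) exist for each m, and |g_m(x)| ≤ C·(ℓ^m/M_m)·|x|^m·L(|x|) with (M_p) satisfying the factorial tail bound ∑_{k=p}^∞ k!ℓ^k/M_k ≤ C_ℓ p!ℓ^p/M_p. Define f_j(x) = (x^{j−1}/j!)·∑_{m=j}^∞ m! g_m(x) x^{−m}. Then for each j the limits lim_{x→±∞} f_j(x)/(x^{j−1}L(|x|)) exist and equal (1/j!)·∑_{m=j}^∞ lim_{x→±∞} m!·g_m(x)/(x^m L(|x|)). -/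
open Filter Topology

private lemma f_j_aux (M : ℕ → ℝ) (hM : ∀ p, 0 < M p)
    (hconv : ∀ ℓ' : ℝ, 0 < ℓ' → Summable (fun k : ℕ => (Nat.factorial k : ℝ) * ℓ' ^ k / M k))
    (L : ℝ → ℝ) (hLpos : ∀ x : ℝ, 0 < x → 0 < L x)
    (ℓ C : ℝ) (hℓ : 0 < ℓ) (hC : 0 < C)
    (g : ℕ → ℝ → ℝ)
    (hgb : ∀ (m : ℕ) (x : ℝ), |g m x| ≤ C * (ℓ ^ m / M m) * |x| ^ m * L |x|)
    {l : Filter ℝ} (hl : ∀ᶠ x in l, x ≠ 0)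
    (c : ℕ → ℝ)
    (hg : ∀ m : ℕ, Tendsto (fun x => g m x / (x ^ m * L |x|)) l (nhds (c m)))
    (f : ℕ → ℝ → ℝ)
    (hf : ∀ (j : ℕ) (x : ℝ), x ≠ 0 → f j x =
      x ^ ((j : ℤ) - 1) / (Nat.factorial j : ℝ) *
        ∑' m : ℕ, if j ≤ m then (Nat.factorial m : ℝ) * g m x * x ^ (-(m : ℤ)) else 0)
    (j : ℕ) :
    Tendsto (fun x => f j x / (x ^ ((j : ℤ) - 1) * L |x|)) l
      (nhds ((1 / (Nat.factorial j : ℝ)) *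
        ∑' m : ℕ, if j ≤ m then (Nat.factorial m : ℝ) * c m else 0)) := by
  set F : ℝ → ℕ → ℝ := fun x m =>
    if j ≤ m then (Nat.factorial m : ℝ) * (g m x / (x ^ m * L |x|)) else 0 with hF
  have key : Tendsto (fun x => ∑' m, F x m) l
      (nhds (∑' m : ℕ, if j ≤ m then (Nat.factorial m : ℝ) * c m else 0)) := by
    apply tendsto_tsum_of_dominated_convergence
      (bound := fun m : ℕ => C * ((Nat.factorial m : ℝ) * ℓ ^ m / M m))
    · exact (hconv ℓ hℓ).mul_left C
    · intro m
      simp only [hF]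
      split_ifs
      · exact (hg m).const_mul _
      · exact tendsto_const_nhds
    · filter_upwards [hl] with x hx m
      have hxp : 0 < |x| := abs_pos.2 hx
      have hL : 0 < L |x| := hLpos _ hxp
      have hbm : (0:ℝ) < C * ((Nat.factorial m : ℝ) * ℓ ^ m / M m) := by
        have := hM m
        positivity
      simp only [hF]
      split_ifs
      · rw [Real.norm_eq_abs, abs_mul, abs_div, abs_mul, abs_pow,
          abs_of_pos hL, Nat.abs_cast]
        have hden : 0 < |x| ^ m * L |x| := by positivity
        rw [mul_div_assoc', div_le_iff₀ hden]
        calc (Nat.factorial m : ℝ) * |g m x|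
            ≤ (Nat.factorial m : ℝ) * (C * (ℓ ^ m / M m) * |x| ^ m * L |x|) := by
              exact mul_le_mul_of_nonneg_left (hgb m x) (by positivity)
          _ = C * ((Nat.factorial m : ℝ) * ℓ ^ m / M m) * (|x| ^ m * L |x|) := by
              field_simp
      · simpa using hbm.le
  have heq : ∀ᶠ x in l, f j x / (x ^ ((j : ℤ) - 1) * L |x|)
      = (1 / (Nat.factorial j : ℝ)) * ∑' m, F x m := by
    filter_upwards [hl] with x hx
    have hxp : 0 < |x| := abs_pos.2 hx
    have hL : 0 < L |x| := hLpos _ hxp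
    have hz : (x : ℝ) ^ ((j : ℤ) - 1) ≠ 0 := zpow_ne_zero _ hx
    have hj : ((Nat.factorial j : ℝ)) ≠ 0 := by positivity
    rw [hf j x hx]
    have hterm : ∀ m : ℕ,
        (if j ≤ m then (Nat.factorial m : ℝ) * g m x * x ^ (-(m : ℤ)) else 0) / L |x|
          = F x m := by
      intro m
      simp only [hF]
      split_ifs
      · rw [zpow_neg, zpow_natCast, div_eq_mul_inv, div_eq_mul_inv, mul_inv]
        ring
      · simp
    have : (∑' m : ℕ, if j ≤ m then (Nat.factorial m : ℝ) * g m x * x ^ (-(m : ℤ)) else 0)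
        / L |x| = ∑' m, F x m := by
      rw [← tsum_div_const]
      exact tsum_congr hterm
    rw [← this]
    field_simp
  exact Tendsto.congr' (heq.mono fun x h => h.symm) (key.const_mul _)

/-- The limits at ±∞ of f_j(x)/(x^{j−1}L(|x|)) exist and equal
(1/j!)·∑_{m≥j} m!·lim_{x→±∞} g_m(x)/(x^m L(|x|)). -/
theorem f_j_limits (M : ℕ → ℝ) (hM : ∀ p, 0 < M p)
    (hconv : ∀ ℓ' : ℝ, 0 < ℓ' → Summable (fun k : ℕ => (Nat.factorial k : ℝ) * ℓ' ^ k / M k))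
    (htail : ∀ ℓ' : ℝ, 0 < ℓ' → ∃ Cl : ℝ, 0 < Cl ∧ ∀ p : ℕ,
      (∑' k : ℕ, if p ≤ k then (Nat.factorial k : ℝ) * ℓ' ^ k / M k else 0)
        ≤ Cl * ((Nat.factorial p : ℝ) * ℓ' ^ p / M p))
    (L : ℝ → ℝ) (hLpos : ∀ x : ℝ, 0 < x → 0 < L x)
    (hSV : ∀ a : ℝ, 0 < a → Tendsto (fun x => L (a * x) / L x) atTop (nhds 1))
    (ℓ C : ℝ) (hℓ : 0 < ℓ) (hC : 0 < C)
    (g : ℕ → ℝ → ℝ) (hgc : ∀ m, ContinuousOn (g m) {x : ℝ | x ≠ 0})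
    (hgsupp : ∀ m, Function.support (g m) ⊆ {x : ℝ | Real.exp 1 < |x|})
    (hgb : ∀ (m : ℕ) (x : ℝ), |g m x| ≤ C * (ℓ ^ m / M m) * |x| ^ m * L |x|)
    (cp cm : ℕ → ℝ)
    (hgp : ∀ m : ℕ, Tendsto (fun x => g m x / (x ^ m * L |x|)) atTop (nhds (cp m)))
    (hgm : ∀ m : ℕ, Tendsto (fun x => g m x / (x ^ m * L |x|)) atBot (nhds (cm m)))
    (f : ℕ → ℝ → ℝ)
    (hf : ∀ (j : ℕ) (x : ℝ), x ≠ 0 → f j x =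
      x ^ ((j : ℤ) - 1) / (Nat.factorial j : ℝ) *
        ∑' m : ℕ, if j ≤ m then (Nat.factorial m : ℝ) * g m x * x ^ (-(m : ℤ)) else 0) :
    ∀ j : ℕ,
      Tendsto (fun x => f j x / (x ^ ((j : ℤ) - 1) * L |x|)) atTop
        (nhds ((1 / (Nat.factorial j : ℝ)) *
          ∑' m : ℕ, if j ≤ m then (Nat.factorial m : ℝ) * cp m else 0)) ∧
      Tendsto (fun x => f j x / (x ^ ((j : ℤ) - 1) * L |x|)) atBot
        (nhds ((1 / (Nat.factorial j : ℝ)) *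
          ∑' m : ℕ, if j ≤ m then (Nat.factorial m : ℝ) * cm m else 0)) := by
  intro j
  constructor
  · exact f_j_aux M hM hconv L hLpos ℓ C hℓ hC g hgb
      (eventually_ne_atTop 0) cp hgp f hf j
  · exact f_j_aux M hM hconv L hLpos ℓ C hℓ hC g hgb
      (eventually_ne_atBot 0) cm hgm f hf j
end

section
/- Let L be slowly varying at infinity (extended continuously with L(x) = 0 for x ≤ 1) and let f₀ be continuous with lim_{x→±∞} f₀(±x)·x/L(x) = ±c₀^±. Set F(x) = ∫₀^x f₀(t)dt. Then uniformly for x in compact subsets of ℝ∖{0}: F(λx) = F(sgn(x)·λ) + c₀^{sgn(x)}·L(λ)·log|x| + o(L(λ)) as λ → ∞. -/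
/-!
Put `h t = log L(eᵗ)`. Slow variation says `h (t + s) - h t → 0` for each fixed `s`. Since `h` is
measurable, Egorov's theorem on a bounded interval makes both `u ↦ h (t + u) - h t` and
`u ↦ h (t + s + u) - h (t + s)` uniformly small off sets of small measure, and translation
invariance of Lebesgue measure yields a common good `u`; subtracting gives uniformity in `s`
(Karamata's uniform convergence theorem).

Substituting `t = λu`, `(∫_λ^{λx} f₀) / L(λ) - c log x = ∫_1^x (g_λ(u) - c) du / u` with
`g_λ(u) = (f₀(λu) λu / L(λu)) · (L(λu) / L(λ)) → c` uniformly for `u` in compacts of `(0, ∞)`.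
Negative `x` reduce to this through `t ↦ f₀(-t)`.
-/

open Filter Topology MeasureTheory Set

theorem exists_mem_notMem_and_add_notMem {G : Type*} [MeasurableSpace G] [AddGroup G]
    [MeasurableAdd G] (μ : Measure G) [μ.IsAddLeftInvariant] {E E' I : Set G} (g : G)
    (h : μ E + μ E' < μ I) : ∃ u ∈ I, u ∉ E ∧ g + u ∉ E' := by
  by_contra! hI
  have hcover : I ⊆ E ∪ (fun u => g + u) ⁻¹' E' := fun u hu =>
    (em (u ∈ E)).imp id (hI u hu)
  have := (measure_mono (μ := μ) hcover).trans (measure_union_le _ _)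
  rw [measure_preimage_add] at this
  exact this.not_gt h

theorem tendsto_sub_comp_add_of_measurable {h : ℝ → ℝ} (hh : Measurable h)
    (hpt : ∀ s, Tendsto (fun t => h (t + s) - h t) atTop (𝓝 0))
    {t s : ℕ → ℝ} (ht : Tendsto t atTop atTop) {R : ℝ} (hs : ∀ᶠ n in atTop, |s n| ≤ R) :
    Tendsto (fun n => h (t n + s n) - h (t n)) atTop (𝓝 0) := by
  wlog hR : 0 < R generalizing R
  · exact this (hs.mono fun n hn => hn.trans (le_max_left R 1)) (by positivity)
  have hts : Tendsto (fun n => t n + s n) atTop atTop := by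
    refine tendsto_atTop_add_left_of_le' _ (-R) ?_ ht |>.congr fun n => add_comm _ _
    exact hs.mono fun n hn => neg_le_of_abs_le hn
  set J := Icc (-R) (2 * R)
  have hJ : volume J ≠ ⊤ := by simp [J]
  have hmeas : ∀ (τ : ℕ → ℝ) n, StronglyMeasurable fun u => h (τ n + u) - h (τ n) := fun τ n =>
    ((hh.comp (measurable_const_add _)).sub measurable_const).stronglyMeasurable
  obtain ⟨E, -, -, hEμ, hE⟩ := tendstoUniformlyOn_of_ae_tendsto (hmeas t) stronglyMeasurable_const
    measurableSet_Icc hJ (ae_of_all _ fun u _ => (hpt u).comp ht) (ε := R / 4) (by positivity)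
  obtain ⟨E', -, -, hE'μ, hE'⟩ := tendstoUniformlyOn_of_ae_tendsto (hmeas _)
    stronglyMeasurable_const measurableSet_Icc hJ (ae_of_all _ fun u _ => (hpt u).comp hts)
    (ε := R / 4) (by positivity)
  rw [Metric.tendsto_nhds]
  intro ε hε
  filter_upwards [Metric.tendstoUniformlyOn_iff.mp hE (ε / 2) (by positivity),
    Metric.tendstoUniformlyOn_iff.mp hE' (ε / 2) (by positivity), hs] with n hn hn' hsn
  have hvol : volume E' + volume E < volume (Icc 0 R) := by
    rw [Real.volume_Icc, sub_zero]
    refine (add_le_add hE'μ hEμ).trans_lt ?_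
    rw [← ENNReal.ofReal_add (by positivity) (by positivity), ENNReal.ofReal_lt_ofReal_iff hR]
    linarith
  obtain ⟨u, ⟨hu0, huR⟩, huE', huE⟩ := exists_mem_notMem_and_add_notMem volume (s n) hvol
  obtain ⟨hsl, hsu⟩ := abs_le.mp hsn
  have h₁ := hn (s n + u) ⟨⟨by linarith, by linarith⟩, huE⟩
  have h₂ := hn' u ⟨⟨by linarith, by linarith⟩, huE'⟩
  simp only [dist_zero_left, dist_zero_right, Real.norm_eq_abs, ← add_assoc] at h₁ h₂ ⊢
  calc |h (t n + s n) - h (t n)|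
      = |(h (t n + s n + u) - h (t n)) - (h (t n + s n + u) - h (t n + s n))| := by ring_nf
    _ ≤ |h (t n + s n + u) - h (t n)| + |h (t n + s n + u) - h (t n + s n)| := abs_sub _ _
    _ < ε := by linarith

theorem tendsto_sub_comp_add_prod_principal_Icc {h : ℝ → ℝ} (hh : Measurable h)
    (hpt : ∀ s, Tendsto (fun t => h (t + s) - h t) atTop (𝓝 0)) (a b : ℝ) :
    Tendsto (fun q : ℝ × ℝ => h (q.1 + q.2) - h q.1) (atTop ×ˢ 𝓟 (Icc a b)) (𝓝 0) := by
  refine tendsto_iff_seq_tendsto.mpr fun q hq => ?_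
  obtain ⟨ht, hs⟩ := tendsto_prod_iff'.mp hq
  exact tendsto_sub_comp_add_of_measurable hh hpt ht
    ((tendsto_principal.mp hs).mono fun n hn => abs_le_max_abs_abs hn.1 hn.2)

theorem tendsto_mul_prod_principal_Icc_atTop {m : ℝ} (hm : 0 < m) (M : ℝ) :
    Tendsto (fun q : ℝ × ℝ => q.1 * q.2) (atTop ×ˢ 𝓟 (Icc m M)) atTop := by
  refine tendsto_atTop_mono' _ ?_ (tendsto_fst.atTop_mul_const hm)
  filter_upwards [tendsto_fst.eventually (eventually_ge_atTop 0),
    tendsto_snd (mem_principal_self _)] with q hq₁ hq₂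
  exact mul_le_mul_of_nonneg_left hq₂.1 hq₁

theorem tendsto_log_comp_exp_add_sub {L : ℝ → ℝ} (hLpos : ∀ x, 1 < x → 0 < L x)
    (hSV : ∀ a, 0 < a → Tendsto (fun x => L (a * x) / L x) atTop (𝓝 1)) (s : ℝ) :
    Tendsto (fun t => Real.log (L (Real.exp (t + s))) - Real.log (L (Real.exp t))) atTop (𝓝 0) := by
  have h := ((Real.continuousAt_log one_ne_zero).tendsto.comp (hSV _ (Real.exp_pos s))).comp
    Real.tendsto_exp_atTop
  rw [Real.log_one] at h
  refine h.congr' ?_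
  filter_upwards [eventually_gt_atTop 0, eventually_gt_atTop (-s)] with t ht hts
  rw [Function.comp_apply, Function.comp_apply, ← Real.exp_add, add_comm s]
  exact Real.log_div (hLpos _ (Real.one_lt_exp_iff.mpr (by linarith))).ne'
    (hLpos _ (Real.one_lt_exp_iff.mpr ht)).ne'

theorem tendsto_div_prod_principal_Icc_of_slowlyVarying {L : ℝ → ℝ} (hLm : Measurable L)
    (hLpos : ∀ x, 1 < x → 0 < L x)
    (hSV : ∀ a, 0 < a → Tendsto (fun x => L (a * x) / L x) atTop (𝓝 1)) {m : ℝ} (hm : 0 < m)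
    (M : ℝ) : Tendsto (fun q : ℝ × ℝ => L (q.1 * q.2) / L q.1) (atTop ×ˢ 𝓟 (Icc m M)) (𝓝 1) := by
  have hlog : Tendsto (Prod.map Real.log Real.log) (atTop ×ˢ 𝓟 (Icc m M))
      (atTop ×ˢ 𝓟 (Icc (Real.log m) (Real.log M))) :=
    Real.tendsto_log_atTop.prodMap <| tendsto_principal_principal.mpr fun u hu =>
      ⟨Real.log_le_log hm hu.1, Real.log_le_log (hm.trans_le hu.1) hu.2⟩
  have h := (Real.continuous_exp.tendsto 0).comp <|
    (tendsto_sub_comp_add_prod_principal_Icc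
      (Real.measurable_log.comp (hLm.comp Real.measurable_exp))
      (tendsto_log_comp_exp_add_sub hLpos hSV) _ _).comp hlog
  rw [Real.exp_zero] at h
  refine h.congr' ?_
  filter_upwards [tendsto_fst.eventually (eventually_gt_atTop 1),
    (tendsto_mul_prod_principal_Icc_atTop hm M).eventually_gt_atTop 1,
    tendsto_snd (mem_principal_self _)] with q hq₁ hq hq₂
  have hq₁' : 0 < q.1 := by linarith
  have hq₂' : 0 < q.2 := hm.trans_le hq₂.1
  simp only [Function.comp_apply, Prod.map_fst, Prod.map_snd]
  rw [Real.exp_sub, ← Real.log_mul hq₁'.ne' hq₂'.ne', Real.exp_log (mul_pos hq₁' hq₂'),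
    Real.exp_log hq₁', Real.exp_log (hLpos _ hq), Real.exp_log (hLpos _ hq₁)]

theorem tendsto_intervalIntegral_prod_principal_Icc {ι E : Type*} [NormedAddCommGroup E]
    [NormedSpace ℝ E] {l : Filter ι} {G : ι → ℝ → E} {a b x₀ : ℝ} (hx₀ : x₀ ∈ Icc a b)
    (hG : Tendsto (fun q : ι × ℝ => G q.1 q.2) (l ×ˢ 𝓟 (Icc a b)) (𝓝 0)) :
    Tendsto (fun q : ι × ℝ => ∫ u in x₀..q.2, G q.1 u) (l ×ˢ 𝓟 (Icc a b)) (𝓝 0) := by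
  rw [Metric.tendsto_nhds] at hG ⊢
  intro ε hε
  have hba : 0 ≤ b - a := by linarith [hx₀.1, hx₀.2]
  have hG' := eventually_prod_principal_iff.mp (hG (ε / (b - a + 1)) (by positivity))
  refine eventually_prod_principal_iff.mpr (hG'.mono fun i hi x hx => ?_)
  rw [dist_zero_right]
  calc ‖∫ u in x₀..x, G i u‖ ≤ ε / (b - a + 1) * |x - x₀| := by
        refine intervalIntegral.norm_integral_le_of_norm_le_const fun u hu => ?_
        rw [← dist_zero_right]
        exact (hi u (uIcc_subset_Icc hx₀ hx (uIoc_subset_uIcc hu))).le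
    _ ≤ ε / (b - a + 1) * (b - a) := by
        gcongr
        exact abs_sub_le_of_le_of_le hx.1 hx.2 hx₀.1 hx₀.2
    _ < ε := by
        rw [div_mul_eq_mul_div, div_lt_iff₀ (by positivity)]
        nlinarith

theorem tendsto_mul_div_sub_inv_of_slowlyVarying {L f : ℝ → ℝ} (hLm : Measurable L)
    (hLpos : ∀ x, 1 < x → 0 < L x)
    (hSV : ∀ a, 0 < a → Tendsto (fun x => L (a * x) / L x) atTop (𝓝 1))
    {c : ℝ} (hc : Tendsto (fun x => f x * x / L x) atTop (𝓝 c)) {m : ℝ} (hm : 0 < m) (M : ℝ) :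
    Tendsto (fun q : ℝ × ℝ => q.1 / L q.1 * f (q.1 * q.2) - c * q.2⁻¹)
      (atTop ×ˢ 𝓟 (Icc m M)) (𝓝 0) := by
  have hg := (hc.comp (tendsto_mul_prod_principal_Icc_atTop hm M)).mul
    (tendsto_div_prod_principal_Icc_of_slowlyVarying hLm hLpos hSV hm M)
  rw [mul_one] at hg
  replace hg := hg.sub_const c
  rw [sub_self] at hg
  have hbdd : IsBoundedUnder (· ≤ ·) (atTop ×ˢ 𝓟 (Icc m M))
      ((‖·‖) ∘ fun q : ℝ × ℝ => q.2⁻¹) := by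
    refine isBoundedUnder_of_eventually_le (a := m⁻¹) ?_
    filter_upwards [tendsto_snd (mem_principal_self _)] with q hq
    rw [Function.comp_apply, norm_inv, Real.norm_of_nonneg (hm.le.trans hq.1)]
    exact inv_anti₀ hm hq.1
  refine (hg.zero_mul_isBoundedUnder_le hbdd).congr' ?_
  filter_upwards [tendsto_fst.eventually (eventually_gt_atTop 1),
    (tendsto_mul_prod_principal_Icc_atTop hm M).eventually_gt_atTop 1,
    tendsto_snd (mem_principal_self _)] with q hq₁ hq hq₂
  have := hLpos _ hq₁
  have := hLpos _ hq
  have : 0 < q.2 := hm.trans_le hq₂.1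
  simp only [Function.comp_apply]
  field_simp

theorem tendsto_integral_div_sub_log {L f : ℝ → ℝ} (hLm : Measurable L)
    (hLpos : ∀ x, 1 < x → 0 < L x)
    (hSV : ∀ a, 0 < a → Tendsto (fun x => L (a * x) / L x) atTop (𝓝 1)) (hf : Continuous f)
    {c : ℝ} (hc : Tendsto (fun x => f x * x / L x) atTop (𝓝 c)) {m : ℝ} (hm : 0 < m) (M : ℝ) :
    Tendsto (fun q : ℝ × ℝ => (∫ t in q.1..q.1 * q.2, f t) / L q.1 - c * Real.log q.2)
      (atTop ×ˢ 𝓟 (Icc m M)) (𝓝 0) := by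
  refine Tendsto.mono_left ?_ (prod_mono le_rfl (principal_mono.mpr
    (Icc_subset_Icc (min_le_left m 1) (le_max_left M 1))))
  have ha : 0 < min m 1 := lt_min hm one_pos
  have h1 : (1 : ℝ) ∈ Icc (min m 1) (max M 1) := ⟨min_le_right _ _, le_max_right _ _⟩
  -- After substituting `t = lam * u`, this is the integral over `[1, x]` of the integrand below.
  refine (tendsto_intervalIntegral_prod_principal_Icc h1
    (G := fun lam u => lam / L lam * f (lam * u) - c * u⁻¹)
    (tendsto_mul_div_sub_inv_of_slowlyVarying hLm hLpos hSV hc ha _)).congr' ?_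
  filter_upwards [tendsto_fst.eventually (eventually_gt_atTop 1),
    tendsto_snd (mem_principal_self _)] with q hq₁ hq₂
  have hq₁' : 0 < q.1 := by linarith
  have hq₂' : 0 < q.2 := ha.trans_le hq₂.1
  rw [intervalIntegral.integral_sub, intervalIntegral.integral_const_mul,
    intervalIntegral.integral_const_mul, intervalIntegral.integral_comp_mul_left _ hq₁'.ne',
    integral_inv_of_pos one_pos hq₂', mul_one, div_one, smul_eq_mul]
  · field_simp
  · exact (by fun_prop : Continuous fun u => q.1 / L q.1 * f (q.1 * u)).intervalIntegrable _ _
  · refine (continuousOn_const.mul (continuousOn_inv₀.mono ?_)).intervalIntegrable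
    exact fun u hu => ((lt_inf_iff.mpr ⟨one_pos, hq₂'⟩).trans_le hu.1).ne'

theorem eventually_abs_integral_sub_log_le {L f : ℝ → ℝ} (hLm : Measurable L)
    (hLpos : ∀ x, 1 < x → 0 < L x)
    (hSV : ∀ a, 0 < a → Tendsto (fun x => L (a * x) / L x) atTop (𝓝 1)) (hf : Continuous f)
    {c : ℝ} (hc : Tendsto (fun x => f x * x / L x) atTop (𝓝 c)) {m : ℝ} (hm : 0 < m) (M : ℝ)
    {ε : ℝ} (hε : 0 < ε) :
    ∀ᶠ lam in atTop, ∀ x ∈ Icc m M,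
      |(∫ t in lam..lam * x, f t) - c * L lam * Real.log x| ≤ ε * L lam := by
  have h := eventually_prod_principal_iff.mp <|
    Metric.tendsto_nhds.mp (tendsto_integral_div_sub_log hLm hLpos hSV hf hc hm M) ε hε
  filter_upwards [h, eventually_gt_atTop 1] with lam hlam hlam₁ x hx
  have hL := hLpos _ hlam₁
  have hx := hlam x hx
  rw [Real.dist_eq, sub_zero] at hx
  rw [show (∫ t in lam..lam * x, f t) - c * L lam * Real.log x
      = ((∫ t in lam..lam * x, f t) / L lam - c * Real.log x) * L lam by field_simp,
    abs_mul, abs_of_pos hL]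
  exact mul_le_mul_of_nonneg_right hx.le hL.le

theorem IsCompact.exists_abs_mem_Icc {K : Set ℝ} (hK : IsCompact K) (h0 : (0 : ℝ) ∉ K) :
    ∃ m M : ℝ, 0 < m ∧ ∀ x ∈ K, |x| ∈ Icc m M := by
  rcases K.eq_empty_or_nonempty with rfl | hne
  · exact ⟨1, 1, one_pos, fun x hx => hx.elim⟩
  obtain ⟨x₀, hx₀, hmin⟩ := hK.exists_isMinOn hne continuous_abs.continuousOn
  obtain ⟨x₁, -, hmax⟩ := hK.exists_isMaxOn hne continuous_abs.continuousOn
  exact ⟨|x₀|, |x₁|, abs_pos.mpr (ne_of_mem_of_not_mem hx₀ h0), fun x hx => ⟨hmin hx, hmax hx⟩⟩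

theorem primitive_asymptotics_signed_general (L : ℝ → ℝ) (hLc : Continuous L)
    (hLpos : ∀ x : ℝ, 1 < x → 0 < L x)
    (hSV : ∀ a : ℝ, 0 < a → Tendsto (fun x => L (a * x) / L x) atTop (nhds 1))
    (cp cm : ℝ) (f₀ : ℝ → ℝ) (hf₀ : Continuous f₀)
    (hp : Tendsto (fun x => f₀ x * x / L x) atTop (nhds cp))
    (hm : Tendsto (fun x => f₀ (-x) * x / L x) atTop (nhds (-cm)))
    (F : ℝ → ℝ) (hF : ∀ x : ℝ, F x = ∫ t in (0:ℝ)..x, f₀ t) :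
    ∀ K : Set ℝ, IsCompact K → K ⊆ {x : ℝ | x ≠ 0} →
      ∀ ε : ℝ, 0 < ε → ∃ Λ : ℝ, ∀ lam : ℝ, Λ ≤ lam → ∀ x ∈ K,
        |F (lam * x) - F (if 0 < x then lam else -lam)
            - (if 0 < x then cp else cm) * L lam * Real.log (abs x)| ≤ ε * L lam := by
  intro K hK hK0 ε hε
  obtain ⟨m, M, hm0, hKmM⟩ := hK.exists_abs_mem_Icc fun h => hK0 h rfl
  have hFsub : ∀ a b, F b - F a = ∫ t in a..b, f₀ t := fun a b => by
    rw [hF, hF, intervalIntegral.integral_interval_sub_left (hf₀.intervalIntegrable _ _)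
      (hf₀.intervalIntegrable _ _)]
  obtain ⟨Λ, hΛ⟩ := eventually_atTop.mp <|
    (eventually_abs_integral_sub_log_le hLc.measurable hLpos hSV hf₀ hp hm0 M hε).and
    (eventually_abs_integral_sub_log_le (f := fun t => f₀ (-t)) hLc.measurable hLpos hSV
      (hf₀.comp continuous_neg) hm hm0 M hε)
  refine ⟨Λ, fun lam hlam x hx => ?_⟩
  obtain ⟨hpos, hneg⟩ := hΛ lam hlam
  rcases (hK0 hx).lt_or_gt with hx0 | hx0
  · have h := hneg |x| (hKmM x hx)
    rw [abs_of_neg hx0, intervalIntegral.integral_comp_neg fun t => f₀ t, mul_neg, neg_neg,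
      ← hFsub, ← abs_neg] at h
    rw [if_neg hx0.not_gt, if_neg hx0.not_gt, abs_of_neg hx0]
    convert h using 2
    ring
  · rw [if_pos hx0, if_pos hx0, hFsub]
    simpa only [abs_of_pos hx0] using hpos |x| (hKmM x hx)

/-- Key pointwise asymptotic for the primitive F(x) = ∫₀ˣ f₀: uniformly for x in compact
subsets of ℝ∖{0}, F(λx) = F(sgn(x)λ) + c₀^{sgn(x)}·L(λ)·log|x| + o(L(λ)) as λ → ∞. -/
theorem primitive_asymptotics_signed (L : ℝ → ℝ) (hLc : Continuous L)
    (hLzero : ∀ x : ℝ, x ≤ 1 → L x = 0) (hLpos : ∀ x : ℝ, 1 < x → 0 < L x)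
    (hSV : ∀ a : ℝ, 0 < a → Tendsto (fun x => L (a * x) / L x) atTop (nhds 1))
    (cp cm : ℝ) (f₀ : ℝ → ℝ) (hf₀ : Continuous f₀)
    (hp : Tendsto (fun x => f₀ x * x / L x) atTop (nhds cp))
    (hm : Tendsto (fun x => f₀ (-x) * x / L x) atTop (nhds (-cm)))
    (F : ℝ → ℝ) (hF : ∀ x : ℝ, F x = ∫ t in (0:ℝ)..x, f₀ t) :
    ∀ K : Set ℝ, IsCompact K → K ⊆ {x : ℝ | x ≠ 0} →
      ∀ ε : ℝ, 0 < ε → ∃ Λ : ℝ, ∀ lam : ℝ, Λ ≤ lam → ∀ x ∈ K,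
        |F (lam * x) - F (if 0 < x then lam else -lam)
            - (if 0 < x then cp else cm) * L lam * Real.log (abs x)| ≤ ε * L lam :=
  primitive_asymptotics_signed_general L hLc hLpos hSV cp cm f₀ hf₀ hp hm F hF
end
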